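/- arXiv:2012.11557 — 12 statements merged into one kernel-verified Lean document; each statement's English description precedes it below -/
import Mathlib

section
/- For finite nonempty sets P and Q of points in ℝ^M, the infimum defining DoM(P,Q) is attained: there exists a family (p'_p)_{p∈P} of points in ℝ^M whose image set weakly dominates Q and such that Σ_{p∈P} d(p, p'_p) = DoM(P,Q). -/
/-- Point `p` weakly dominates point `q`: `p m ≤ q m` for every coordinate. -/
def WDom {M : ℕ} (p q : Fin M → ℝ) : Prop := ∀ m, p m ≤ q m

/-- Set `P` weakly dominates set `Q`. -/
def SetWDom {M : ℕ} (P Q : Finset (Fin M → ℝ)) : Prop :=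
  ∀ q ∈ Q, ∃ p ∈ P, WDom p q

/-- Manhattan distance. -/
noncomputable def mdist {M : ℕ} (p p' : Fin M → ℝ) : ℝ := ∑ m, |p m - p' m|

/-- Dominance move: infimum of total Manhattan move of a family `(f p)_{p ∈ P}`
whose image set weakly dominates `Q`. -/
noncomputable def DoM {M : ℕ} (P Q : Finset (Fin M → ℝ)) : ℝ :=
  sInf { c : ℝ | ∃ f : (Fin M → ℝ) → (Fin M → ℝ),
    (∀ q ∈ Q, ∃ p ∈ P, WDom (f p) q) ∧ c = ∑ p ∈ P, mdist p (f p) }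

open Finset

attribute [local instance] Classical.propDecidable

/-- Canonical "snap-down" point for `p` with respect to an assignment `a`. -/
noncomputable def Fcan {M : ℕ} (Q : Finset (Fin M → ℝ)) (a : (Fin M → ℝ) → (Fin M → ℝ))
    (p : Fin M → ℝ) : Fin M → ℝ :=
  fun m => (insert (p m) ((Q.filter (fun q => a q = p)).image (fun q => q m))).min'
    (Finset.insert_nonempty _ _)

lemma Fcan_le_self {M : ℕ} (Q : Finset (Fin M → ℝ)) (a : (Fin M → ℝ) → (Fin M → ℝ))
    (p : Fin M → ℝ) (m : Fin M) : Fcan Q a p m ≤ p m := by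
  unfold Fcan
  exact Finset.min'_le _ _ (Finset.mem_insert_self _ _)

lemma Fcan_le_assigned {M : ℕ} {Q : Finset (Fin M → ℝ)} {a : (Fin M → ℝ) → (Fin M → ℝ)}
    {p q : Fin M → ℝ} (hq : q ∈ Q) (h : a q = p) (m : Fin M) : Fcan Q a p m ≤ q m := by
  unfold Fcan
  have hmem : q m ∈ insert (p m) ((Q.filter (fun q' => a q' = p)).image (fun q' => q' m)) := by
    apply Finset.mem_insert_of_mem
    apply Finset.mem_image_of_mem
    rw [Finset.mem_filter]
    exact ⟨hq, h⟩
  exact Finset.min'_le _ _ hmem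

lemma mdist_Fcan_le {M : ℕ} (Q : Finset (Fin M → ℝ)) (a f : (Fin M → ℝ) → (Fin M → ℝ))
    (p : Fin M → ℝ) (h : ∀ q ∈ Q, a q = p → WDom (f p) q) :
    mdist p (Fcan Q a p) ≤ mdist p (f p) := by
  apply Finset.sum_le_sum
  intro m _
  set c := Fcan Q a p m with hc
  have hc1 : c ≤ p m := Fcan_le_self Q a p m
  have hc2 : min (p m) (f p m) ≤ c := by
    have hmem : c ∈ insert (p m) ((Q.filter (fun q => a q = p)).image (fun q => q m)) := by
      rw [hc]; unfold Fcan; exact Finset.min'_mem _ _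
    rcases Finset.mem_insert.1 hmem with h1 | h1
    · rw [h1]; exact min_le_left _ _
    · obtain ⟨q, hqf, hqm⟩ := Finset.mem_image.1 h1
      obtain ⟨hqQ, hqa⟩ := Finset.mem_filter.1 hqf
      have : f p m ≤ q m := h q hqQ hqa m
      calc min (p m) (f p m) ≤ f p m := min_le_right _ _
        _ ≤ q m := this
        _ = c := hqm
  rw [abs_of_nonneg (sub_nonneg.2 hc1)]
  have : p m - c ≤ p m - min (p m) (f p m) := by linarith
  refine this.trans ?_
  rcases le_total (p m) (f p m) with h1 | h1
  · rw [min_eq_left h1]; simp [abs_nonneg]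
  · rw [min_eq_right h1]
    exact le_abs_self _

theorem dom_attained {M : ℕ} (P Q : Finset (Fin M → ℝ))
    (hP : P.Nonempty) (hQ : Q.Nonempty) :
    ∃ f : (Fin M → ℝ) → (Fin M → ℝ),
      (∀ q ∈ Q, ∃ p ∈ P, WDom (f p) q) ∧
      ∑ p ∈ P, mdist p (f p) = DoM P Q := by
  obtain ⟨p₀, hp₀⟩ := hP
  -- extend an assignment on Q to all points
  set ext : (↥Q → ↥P) → (Fin M → ℝ) → (Fin M → ℝ) :=
    fun b q => if h : q ∈ Q then (b ⟨q, h⟩ : Fin M → ℝ) else p₀ with hext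
  set cost : (↥Q → ↥P) → ℝ := fun b => ∑ p ∈ P, mdist p (Fcan Q (ext b) p) with hcost
  -- feasibility of each canonical family
  have hfeasb : ∀ b : ↥Q → ↥P, ∀ q ∈ Q, ∃ p ∈ P, WDom (Fcan Q (ext b) p) q := by
    intro b q hq
    refine ⟨ext b q, ?_, ?_⟩
    · simp only [hext, dif_pos hq]
      exact (b ⟨q, hq⟩).2
    · intro m
      exact Fcan_le_assigned hq rfl m
  -- take the minimizing assignment
  obtain ⟨b₀, -, hb₀⟩ := Finset.exists_min_image (Finset.univ : Finset (↥Q → ↥P)) cost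
    ⟨fun _ => ⟨p₀, hp₀⟩, Finset.mem_univ _⟩
  set S := { c : ℝ | ∃ f : (Fin M → ℝ) → (Fin M → ℝ),
    (∀ q ∈ Q, ∃ p ∈ P, WDom (f p) q) ∧ c = ∑ p ∈ P, mdist p (f p) } with hS
  have hmem : cost b₀ ∈ S := ⟨Fcan Q (ext b₀), hfeasb b₀, rfl⟩
  have hlb : ∀ c ∈ S, cost b₀ ≤ c := by
    rintro c ⟨f, hfeas, rfl⟩
    set b : ↥Q → ↥P := fun q => ⟨(hfeas q q.2).choose, (hfeas q q.2).choose_spec.1⟩ with hb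
    have hW : ∀ q : ↥Q, WDom (f (b q : Fin M → ℝ)) q := fun q => (hfeas q q.2).choose_spec.2
    have h1 : cost b ≤ ∑ p ∈ P, mdist p (f p) := by
      apply Finset.sum_le_sum
      intro p _
      apply mdist_Fcan_le
      intro q hq hqa
      have : ext b q = (b ⟨q, hq⟩ : Fin M → ℝ) := by simp only [hext, dif_pos hq]
      rw [this] at hqa
      have := hW ⟨q, hq⟩
      rwa [hqa] at this
    exact (hb₀ b (Finset.mem_univ b)).trans h1
  have hDoM : DoM P Q = cost b₀ := by
    rw [DoM]
    exact le_antisymm (csInf_le ⟨cost b₀, hlb⟩ hmem) (le_csInf ⟨cost b₀, hmem⟩ hlb)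
  exact ⟨Fcan Q (ext b₀), hfeasb b₀, by rw [hDoM]⟩
end

section
/- For finite nonempty sets P and Q of points in ℝ^M, DoM(P,Q) = 0 if and only if P weakly dominates Q. -/
theorem dom_eq_zero_iff {M : ℕ} (P Q : Finset (Fin M → ℝ))
    (hP : P.Nonempty) (hQ : Q.Nonempty) :
    DoM P Q = 0 ↔ SetWDom P Q := by
  set S := { c : ℝ | ∃ f : (Fin M → ℝ) → (Fin M → ℝ),
    (∀ q ∈ Q, ∃ p ∈ P, WDom (f p) q) ∧ c = ∑ p ∈ P, mdist p (f p) } with hS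
  have hlb : ∀ c ∈ S, (0:ℝ) ≤ c := by
    rintro c ⟨f, -, rfl⟩
    exact Finset.sum_nonneg fun p _ => Finset.sum_nonneg fun m _ => abs_nonneg _
  have hne : S.Nonempty := by
    refine ⟨∑ p ∈ P, mdist p (fun m => Q.inf' hQ (fun r => r m)),
      fun _ m => Q.inf' hQ (fun r => r m), ?_, rfl⟩
    intro q hq
    exact ⟨hP.choose, hP.choose_spec, fun m => Finset.inf'_le _ hq⟩
  constructor
  · intro h q hq
    have key : ∀ ε : ℝ, 0 < ε → ∃ p ∈ P, ∀ m, p m ≤ q m + ε := by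
      intro ε hε
      obtain ⟨c, hc, hcε⟩ := Real.lt_sInf_add_pos hne hε
      rw [show sInf S = 0 from h, zero_add] at hcε
      obtain ⟨f, hf, rfl⟩ := hc
      obtain ⟨p, hpP, hdom⟩ := hf q hq
      refine ⟨p, hpP, fun m => ?_⟩
      have h1 : |p m - f p m| ≤ mdist p (f p) := by
        exact Finset.single_le_sum (f := fun m => |p m - f p m|)
          (fun m _ => abs_nonneg _) (Finset.mem_univ m)
      have h2 : mdist p (f p) ≤ ∑ p ∈ P, mdist p (f p) :=
        Finset.single_le_sum (f := fun r => mdist r (f r))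
          (fun r _ => Finset.sum_nonneg fun m _ => abs_nonneg _) hpP
      have h3 : p m - f p m ≤ |p m - f p m| := le_abs_self _
      have := hdom m
      linarith
    have key' : ∀ n : ℕ, ∃ p : ↥P, ∀ m, (p : Fin M → ℝ) m ≤ q m + 1/(n+1) := by
      intro n
      obtain ⟨p, hpP, hp⟩ := key (1/(n+1)) (by positivity)
      exact ⟨⟨p, hpP⟩, hp⟩
    choose g hg using key'
    obtain ⟨p, hp⟩ := Finite.exists_infinite_fiber g
    have hp : (g ⁻¹' {p}).Infinite := Set.infinite_coe_iff.mp hp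
    refine ⟨(p : Fin M → ℝ), p.2, fun m => ?_⟩
    refine le_of_forall_pos_le_add fun ε hε => ?_
    obtain ⟨N, hN⟩ := exists_nat_one_div_lt hε
    obtain ⟨n, hn, hNn⟩ := hp.exists_gt N
    have hginv : g n = p := hn
    have := hg n m
    rw [hginv] at this
    have hmono : (1:ℝ)/(n+1) ≤ 1/(N+1) := by
      apply one_div_le_one_div_of_le (by positivity)
      have : (N:ℝ) ≤ n := Nat.cast_le.2 hNn.le
      linarith
    linarith
  · intro h
    refine le_antisymm ?_ (le_csInf hne hlb)
    have h0 : (0:ℝ) ∈ S := by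
      refine ⟨id, fun q hq => h q hq, ?_⟩
      simp [mdist]
    exact csInf_le ⟨0, hlb⟩ h0
end

section
/- For finite nonempty sets P and Q of points in ℝ^M, the set P is better than Q (i.e., P weakly dominates Q and Q does not weakly dominate P) if and only if DoM(P,Q) = 0 and DoM(Q,P) > 0. -/
namespace DomAux

variable {M : ℕ} (P Q : Finset (Fin M → ℝ))

def DomSet : Set ℝ :=
  { c : ℝ | ∃ f : (Fin M → ℝ) → (Fin M → ℝ),
    (∀ q ∈ Q, ∃ p ∈ P, WDom (f p) q) ∧ c = ∑ p ∈ P, mdist p (f p) }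

lemma mdist_nonneg (p p' : Fin M → ℝ) : 0 ≤ mdist p p' :=
  Finset.sum_nonneg fun _ _ => abs_nonneg _

lemma domset_nonneg : ∀ c ∈ DomSet P Q, (0:ℝ) ≤ c := by
  rintro c ⟨f, -, rfl⟩
  exact Finset.sum_nonneg fun p _ => mdist_nonneg p (f p)

lemma domset_nonempty (hP : P.Nonempty) (hQ : Q.Nonempty) : (DomSet P Q).Nonempty := by
  refine ⟨_, fun _ => fun m => Q.inf' hQ (fun q => q m), fun q hq => ⟨hP.choose, hP.choose_spec, fun m => Finset.inf'_le _ hq⟩, rfl⟩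

lemma dom_nonneg : 0 ≤ DoM P Q :=
  Real.sInf_nonneg (domset_nonneg P Q)

lemma dom_eq_zero (h : SetWDom P Q) : DoM P Q = 0 := by
  have h0 : (0:ℝ) ∈ DomSet P Q := by
    refine ⟨id, fun q hq => h q hq, ?_⟩
    simp [mdist]
  have := csInf_le ⟨0, domset_nonneg P Q⟩ h0
  exact le_antisymm this (dom_nonneg P Q)

lemma dom_pos (hP : P.Nonempty) (hQ : Q.Nonempty) (h : ¬ SetWDom P Q) :
    0 < DoM P Q := by
  unfold SetWDom at h
  push_neg at h
  obtain ⟨q, hq, hnd⟩ := h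
  set δ : (Fin M → ℝ) → ℝ := fun p => ∑ m, max (p m - q m) 0 with hδ
  have hδpos : ∀ p ∈ P, 0 < δ p := by
    intro p hp
    have := hnd p hp
    simp only [WDom, not_forall, not_le] at this
    obtain ⟨m, hm⟩ := this
    refine Finset.sum_pos' (fun i _ => le_max_right _ _) ⟨m, Finset.mem_univ m, ?_⟩
    exact lt_max_of_lt_left (by linarith)
  have hd : 0 < P.inf' hP δ := (Finset.lt_inf'_iff hP).2 hδpos
  have hlb : ∀ c ∈ DomSet P Q, P.inf' hP δ ≤ c := by
    rintro c ⟨f, hf, rfl⟩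
    obtain ⟨p, hp, hw⟩ := hf q hq
    have h1 : δ p ≤ mdist p (f p) := by
      refine Finset.sum_le_sum fun m _ => ?_
      have := hw m
      exact max_le ((le_abs_self _).trans' (by linarith)) (abs_nonneg _)
    have h2 : mdist p (f p) ≤ ∑ p' ∈ P, mdist p' (f p') :=
      Finset.single_le_sum (fun p' _ => mdist_nonneg p' (f p')) hp
    exact (Finset.inf'_le δ hp).trans (h1.trans h2)
  exact hd.trans_le (le_csInf (domset_nonempty P Q hP hQ) hlb)

lemma dom_zero_iff (hP : P.Nonempty) (hQ : Q.Nonempty) :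
    DoM P Q = 0 ↔ SetWDom P Q := by
  constructor
  · intro h
    by_contra hc
    exact absurd h (dom_pos P Q hP hQ hc).ne'
  · exact dom_eq_zero P Q

end DomAux

theorem dom_better_iff {M : ℕ} (P Q : Finset (Fin M → ℝ))
    (hP : P.Nonempty) (hQ : Q.Nonempty) :
    (SetWDom P Q ∧ ¬ SetWDom Q P) ↔ (DoM P Q = 0 ∧ 0 < DoM Q P) := by
  rw [DomAux.dom_zero_iff P Q hP hQ]
  have h2 : 0 < DoM Q P ↔ ¬ SetWDom Q P := by
    constructor
    · intro h hc
      exact absurd (DomAux.dom_eq_zero Q P hc) h.ne'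
    · exact DomAux.dom_pos Q P hQ hP
  rw [h2]
end

section
/- Let P, Q, R be finite nonempty sets of points in ℝ^M. If P weakly dominates Q, then DoM(P,R) ≤ DoM(Q,R). -/
theorem dom_mono_left {M : ℕ} (P Q R : Finset (Fin M → ℝ))
    (hP : P.Nonempty) (hQ : Q.Nonempty) (hR : R.Nonempty)
    (h : SetWDom P Q) : DoM P R ≤ DoM Q R := by
  classical
  have hbddP : BddBelow { c : ℝ | ∃ f : (Fin M → ℝ) → (Fin M → ℝ),
      (∀ r ∈ R, ∃ p ∈ P, WDom (f p) r) ∧ c = ∑ p ∈ P, mdist p (f p) } := by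
    refine ⟨0, ?_⟩
    rintro c ⟨f, -, rfl⟩
    exact Finset.sum_nonneg fun p _ => Finset.sum_nonneg fun m _ => abs_nonneg _
  have hQne : { c : ℝ | ∃ f : (Fin M → ℝ) → (Fin M → ℝ),
      (∀ r ∈ R, ∃ q ∈ Q, WDom (f q) r) ∧ c = ∑ q ∈ Q, mdist q (f q) }.Nonempty := by
    refine ⟨_, fun _ => fun m => R.inf' hR (fun r => r m), ?_, rfl⟩
    intro r hr
    exact ⟨hQ.choose, hQ.choose_spec, fun m => Finset.inf'_le _ hr⟩
  apply le_csInf hQne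
  rintro c ⟨f, hf, rfl⟩
  -- choose for each q ∈ Q a dominator pq q ∈ P
  set pq : (Fin M → ℝ) → (Fin M → ℝ) :=
    fun q => if hq : q ∈ Q then (h q hq).choose else hP.choose with hpqdef
  have hpqP : ∀ q ∈ Q, pq q ∈ P := by
    intro q hq; simp only [hpqdef, dif_pos hq]; exact (h q hq).choose_spec.1
  have hpq : ∀ q ∈ Q, WDom (pq q) q := by
    intro q hq; simp only [hpqdef, dif_pos hq]; exact (h q hq).choose_spec.2
  set S : (Fin M → ℝ) → Finset (Fin M → ℝ) :=
    fun p => Q.filter (fun q => pq q = p) with hSdef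
  set g : (Fin M → ℝ) → (Fin M → ℝ) :=
    fun p => fun m => (insert p ((S p).image f)).inf'
      (Finset.insert_nonempty _ _) (fun x => x m) with hgdef
  have hgle : ∀ p q, q ∈ S p → ∀ m, g p m ≤ f q m := by
    intro p q hq m
    exact Finset.inf'_le _ (Finset.mem_insert_of_mem (Finset.mem_image_of_mem f hq))
  have hgp : ∀ p m, g p m ≤ p m := fun p m =>
    Finset.inf'_le _ (Finset.mem_insert_self _ _)
  have hcost : ∀ p, mdist p (g p) ≤ ∑ q ∈ S p, mdist q (f q) := by
    intro p
    have : mdist p (g p) = ∑ m, (p m - g p m) := by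
      unfold mdist
      exact Finset.sum_congr rfl fun m _ => abs_of_nonneg (sub_nonneg.2 (hgp p m))
    rw [this]
    calc ∑ m, (p m - g p m) ≤ ∑ m, ∑ q ∈ S p, |q m - f q m| := by
          apply Finset.sum_le_sum
          intro m _
          rw [sub_le_comm]
          apply Finset.le_inf'
          intro x hx
          have hB : (0:ℝ) ≤ ∑ q ∈ S p, |q m - f q m| :=
            Finset.sum_nonneg fun _ _ => abs_nonneg _
          rcases Finset.mem_insert.1 hx with rfl | hx
          · linarith
          · obtain ⟨q, hqS, rfl⟩ := Finset.mem_image.1 hx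
            have hq1 : p m - f q m ≤ |q m - f q m| := by
              have hqQ : q ∈ Q := (Finset.mem_filter.1 hqS).1
              have h1 : pq q m ≤ q m := hpq q hqQ m
              have h2 : pq q = p := (Finset.mem_filter.1 hqS).2
              have := le_abs_self (q m - f q m)
              rw [← h2]; linarith
            have hsingle : |q m - f q m| ≤ ∑ q' ∈ S p, |q' m - f q' m| :=
              Finset.single_le_sum (f := fun q' => |q' m - f q' m|) (fun _ _ => abs_nonneg _) hqS
            linarith
      _ = ∑ q ∈ S p, ∑ m, |q m - f q m| := Finset.sum_comm
      _ = ∑ q ∈ S p, mdist q (f q) := rfl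
  have hdom : ∀ r ∈ R, ∃ p ∈ P, WDom (g p) r := by
    intro r hr
    obtain ⟨q, hqQ, hqd⟩ := hf r hr
    refine ⟨pq q, hpqP q hqQ, fun m => le_trans (hgle _ q ?_ m) (hqd m)⟩
    simp [hSdef, hqQ]
  refine le_trans (csInf_le hbddP ⟨g, hdom, rfl⟩) ?_
  calc ∑ p ∈ P, mdist p (g p) ≤ ∑ p ∈ P, ∑ q ∈ S p, mdist q (f q) :=
        Finset.sum_le_sum fun p _ => hcost p
    _ = ∑ q ∈ Q, mdist q (f q) := Finset.sum_fiberwise_of_maps_to hpqP _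
end

section
/- Let P, Q, R be finite nonempty sets of points in ℝ^M. If P weakly dominates Q, then DoM(R,Q) ≤ DoM(R,P). -/
theorem dom_mono_right {M : ℕ} (P Q R : Finset (Fin M → ℝ))
    (hP : P.Nonempty) (hQ : Q.Nonempty) (hR : R.Nonempty)
    (h : SetWDom P Q) : DoM R Q ≤ DoM R P := by
  apply csInf_le_csInf
  · refine ⟨0, ?_⟩
    rintro c ⟨f, -, rfl⟩
    exact Finset.sum_nonneg fun p _ =>
      Finset.sum_nonneg fun m _ => abs_nonneg _
  · obtain ⟨r, hr⟩ := hR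
    refine ⟨_, fun _ m => P.inf' hP (fun p => p m), ?_, rfl⟩
    intro q hq
    exact ⟨r, hr, fun m => Finset.inf'_le _ hq⟩
  · rintro c ⟨f, hf, rfl⟩
    refine ⟨f, ?_, rfl⟩
    intro q hq
    obtain ⟨p, hp, hpq⟩ := h q hq
    obtain ⟨s, hs, hsp⟩ := hf p hp
    exact ⟨s, hs, fun m => (hsp m).trans (hpq m)⟩
end

section
/- Let P, Q, R be finite nonempty sets of points in ℝ^M. Then DoM(P,Q) + DoM(Q,R) ≥ DoM(P, Q ∪ R). -/
section Aux
variable {M : ℕ}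

/-- The feasible-cost set for `DoM`. -/
def DSet (P Q : Finset (Fin M → ℝ)) : Set ℝ :=
  { c : ℝ | ∃ f : (Fin M → ℝ) → (Fin M → ℝ),
    (∀ q ∈ Q, ∃ p ∈ P, WDom (f p) q) ∧ c = ∑ p ∈ P, mdist p (f p) }

lemma mdist_nonneg (p p' : Fin M → ℝ) : 0 ≤ mdist p p' :=
  Finset.sum_nonneg fun _ _ => abs_nonneg _

lemma DSet_nonempty (P Q : Finset (Fin M → ℝ)) (hP : P.Nonempty) (hQ : Q.Nonempty) :
    (DSet P Q).Nonempty := by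
  refine ⟨_, fun _ => fun m => Q.inf' hQ (fun q => q m), fun q hq => ⟨hP.choose, hP.choose_spec, fun m => Finset.inf'_le _ hq⟩, rfl⟩

lemma DSet_bddBelow (P Q : Finset (Fin M → ℝ)) : BddBelow (DSet P Q) := by
  refine ⟨0, fun c hc => ?_⟩
  obtain ⟨f, _, rfl⟩ := hc
  exact Finset.sum_nonneg fun p _ => mdist_nonneg _ _

lemma key_step (P Q R : Finset (Fin M → ℝ)) (hP : P.Nonempty)
    {c1 c2 : ℝ} (hc1 : c1 ∈ DSet P Q) (hc2 : c2 ∈ DSet Q R) :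
    DoM P (Q ∪ R) ≤ c1 + c2 := by
  classical
  obtain ⟨f, hf, rfl⟩ := hc1
  obtain ⟨g, hg, rfl⟩ := hc2
  set pf : (Fin M → ℝ) → (Fin M → ℝ) := fun q =>
    if h : ∃ p ∈ P, WDom (f p) q then h.choose else hP.choose with hpfdef
  have hpf : ∀ q ∈ Q, pf q ∈ P ∧ WDom (f (pf q)) q := by
    intro q hq
    have h := hf q hq
    simp only [hpfdef, dif_pos h]
    exact ⟨h.choose_spec.1, h.choose_spec.2⟩
  set D : (Fin M → ℝ) → Fin M → ℝ := fun p m =>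
    ∑ q ∈ Q.filter (fun q => pf q = p), max 0 (q m - g q m) with hDdef
  have hD0 : ∀ p m, 0 ≤ D p m := fun p m =>
    Finset.sum_nonneg fun _ _ => le_max_left _ _
  set h : (Fin M → ℝ) → Fin M → ℝ := fun p m => f p m - D p m with hhdef
  have hdom : ∀ x ∈ Q ∪ R, ∃ p ∈ P, WDom (h p) x := by
    intro x hx
    rcases Finset.mem_union.mp hx with hx | hx
    · refine ⟨pf x, (hpf x hx).1, fun m => ?_⟩
      have := (hpf x hx).2 m
      have := hD0 (pf x) m
      simp only [hhdef]
      linarith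
    · obtain ⟨q, hq, hgq⟩ := hg x hx
      refine ⟨pf q, (hpf q hq).1, fun m => ?_⟩
      have h1 : max 0 (q m - g q m) ≤ D (pf q) m := by
        apply Finset.single_le_sum (f := fun q => max 0 (q m - g q m))
          (fun _ _ => le_max_left _ _)
        exact Finset.mem_filter.mpr ⟨hq, rfl⟩
      have h2 := (hpf q hq).2 m
      have h3 := le_max_right 0 (q m - g q m)
      have h4 := hgq m
      simp only [hhdef]
      linarith
  have hle : DoM P (Q ∪ R) ≤ ∑ p ∈ P, mdist p (h p) :=
    csInf_le (DSet_bddBelow P (Q ∪ R)) ⟨h, hdom, rfl⟩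
  have hcost : ∑ p ∈ P, mdist p (h p) ≤
      (∑ p ∈ P, mdist p (f p)) + ∑ q ∈ Q, mdist q (g q) := by
    have step1 : ∀ p ∈ P, mdist p (h p) ≤ mdist p (f p) + ∑ m, D p m := by
      intro p _
      unfold mdist
      rw [← Finset.sum_add_distrib]
      refine Finset.sum_le_sum fun m _ => ?_
      have : p m - h p m = (p m - f p m) + D p m := by simp [hhdef]; ring
      rw [this]
      calc |(p m - f p m) + D p m| ≤ |p m - f p m| + |D p m| := abs_add_le _ _
        _ = |p m - f p m| + D p m := by rw [abs_of_nonneg (hD0 p m)]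
    have step2 : ∑ p ∈ P, ∑ m, D p m ≤ ∑ q ∈ Q, mdist q (g q) := by
      rw [Finset.sum_comm]
      have hfib : ∀ m : Fin M, ∑ p ∈ P, D p m = ∑ q ∈ Q, max 0 (q m - g q m) := by
        intro m
        exact Finset.sum_fiberwise_of_maps_to (fun q hq => (hpf q hq).1) _
      calc ∑ m, ∑ p ∈ P, D p m = ∑ m, ∑ q ∈ Q, max 0 (q m - g q m) := by
            exact Finset.sum_congr rfl fun m _ => hfib m
        _ = ∑ q ∈ Q, ∑ m, max 0 (q m - g q m) := Finset.sum_comm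
        _ ≤ ∑ q ∈ Q, mdist q (g q) := by
            refine Finset.sum_le_sum fun q _ => ?_
            unfold mdist
            exact Finset.sum_le_sum fun m _ => max_le (abs_nonneg _) (le_abs_self _)
    calc ∑ p ∈ P, mdist p (h p) ≤ ∑ p ∈ P, (mdist p (f p) + ∑ m, D p m) :=
          Finset.sum_le_sum step1
      _ = (∑ p ∈ P, mdist p (f p)) + ∑ p ∈ P, ∑ m, D p m := Finset.sum_add_distrib
      _ ≤ _ := by linarith [step2]
  linarith

end Aux

theorem dom_triangle_union {M : ℕ} (P Q R : Finset (Fin M → ℝ))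
    (hP : P.Nonempty) (hQ : Q.Nonempty) (hR : R.Nonempty) :
    DoM P (Q ∪ R) ≤ DoM P Q + DoM Q R := by
  have ne1 := DSet_nonempty P Q hP hQ
  have ne2 := DSet_nonempty Q R hQ hR
  have h2 : ∀ c2 ∈ DSet Q R, DoM P (Q ∪ R) - c2 ≤ sInf (DSet P Q) := by
    intro c2 hc2
    refine le_csInf ne1 fun c1 hc1 => ?_
    linarith [key_step P Q R hP hc1 hc2]
  have h3 : DoM P (Q ∪ R) - sInf (DSet P Q) ≤ sInf (DSet Q R) :=
    le_csInf ne2 fun c2 hc2 => by linarith [h2 c2 hc2]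
  have e1 : DoM P Q = sInf (DSet P Q) := rfl
  have e2 : DoM Q R = sInf (DSet Q R) := rfl
  rw [e1, e2]
  linarith
end

section
/- Let P, Q, R be finite nonempty sets of points in ℝ^M. Then DoM(P,Q) + DoM(P,R) ≥ DoM(P, Q ∪ R). -/
private def domSet {M : ℕ} (P Q : Finset (Fin M → ℝ)) : Set ℝ :=
  { c : ℝ | ∃ f : (Fin M → ℝ) → (Fin M → ℝ),
    (∀ q ∈ Q, ∃ p ∈ P, WDom (f p) q) ∧ c = ∑ p ∈ P, mdist p (f p) }

private lemma domSet_bdd {M : ℕ} (P Q : Finset (Fin M → ℝ)) :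
    BddBelow (domSet P Q) := by
  refine ⟨0, fun c hc => ?_⟩
  obtain ⟨f, _, rfl⟩ := hc
  exact Finset.sum_nonneg fun p _ => Finset.sum_nonneg fun m _ => abs_nonneg _

private lemma domSet_nonempty {M : ℕ} (P Q : Finset (Fin M → ℝ))
    (hP : P.Nonempty) (hQ : Q.Nonempty) : (domSet P Q).Nonempty := by
  refine ⟨_, fun _ => fun m => Q.inf' hQ (fun q => q m), fun q hq => ?_, rfl⟩
  exact ⟨hP.choose, hP.choose_spec, fun m => Finset.inf'_le _ hq⟩

theorem dom_subadditive_union {M : ℕ} (P Q R : Finset (Fin M → ℝ))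
    (hP : P.Nonempty) (hQ : Q.Nonempty) (hR : R.Nonempty) :
    DoM P (Q ∪ R) ≤ DoM P Q + DoM P R := by
  have key : ∀ c ∈ domSet P Q, ∀ d ∈ domSet P R, DoM P (Q ∪ R) ≤ c + d := by
    rintro c ⟨f, hf, rfl⟩ d ⟨g, hg, rfl⟩
    set h : (Fin M → ℝ) → (Fin M → ℝ) := fun p m => min (f p m) (g p m) with hh
    have hmem : (∑ p ∈ P, mdist p (h p)) ∈ domSet P (Q ∪ R) := by
      refine ⟨h, fun q hq => ?_, rfl⟩
      rcases Finset.mem_union.mp hq with hq | hq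
      · obtain ⟨p, hp, hd⟩ := hf q hq
        exact ⟨p, hp, fun m => le_trans (min_le_left _ _) (hd m)⟩
      · obtain ⟨p, hp, hd⟩ := hg q hq
        exact ⟨p, hp, fun m => le_trans (min_le_right _ _) (hd m)⟩
    have hle : (∑ p ∈ P, mdist p (h p)) ≤
        (∑ p ∈ P, mdist p (f p)) + (∑ p ∈ P, mdist p (g p)) := by
      rw [← Finset.sum_add_distrib]
      refine Finset.sum_le_sum fun p _ => ?_
      unfold mdist
      rw [← Finset.sum_add_distrib]
      refine Finset.sum_le_sum fun m _ => ?_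
      rcases min_cases (f p m) (g p m) with ⟨hcase, _⟩ | ⟨hcase, _⟩ <;>
        simp only [hh, hcase] <;>
        [exact le_add_of_nonneg_right (abs_nonneg _);
         exact le_add_of_nonneg_left (abs_nonneg _)]
    exact le_trans (csInf_le (domSet_bdd P (Q ∪ R)) hmem) hle
  have h1 : ∀ d ∈ domSet P R, DoM P (Q ∪ R) - d ≤ DoM P Q := by
    intro d hd
    refine le_csInf (domSet_nonempty P Q hP hQ) fun c hc => ?_
    linarith [key c hc d hd]
  have h2 : DoM P (Q ∪ R) - DoM P Q ≤ DoM P R := by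
    refine le_csInf (domSet_nonempty P R hP hR) fun d hd => ?_
    linarith [h1 d hd]
  linarith
end

section
/- Let p ∈ ℝ^M and let S be a finite nonempty set of points in ℝ^M. The minimum Manhattan distance needed to move p to a single point that weakly dominates every point of S equals Σ_m max(0, p m − min_{q ∈ S} q m), and this infimum is attained at the point whose m-th coordinate is min(p m, min_{q ∈ S} q m). -/
/-! Dominating every point of `S` is the coordinatewise constraint `p' m ≤ min_{q ∈ S} q m`, so
the distance splits into independent one-dimensional problems, each solved by clipping `p m`
at that minimum. -/

section LinearOrderedAddCommGroup

variable {α : Type*} [AddCommGroup α] [LinearOrder α] [IsOrderedAddMonoid α]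

theorem abs_sub_min_self_left (a b : α) : |a - min a b| = max 0 (a - b) := by
  rw [← max_sub_sub_left, sub_self, abs_of_nonneg (le_max_left _ _)]

theorem max_zero_sub_le_abs_sub_of_le {a b c : α} (h : c ≤ b) : max 0 (a - b) ≤ |a - c| :=
  max_le (abs_nonneg _) ((sub_le_sub_left h a).trans (le_abs_self _))

end LinearOrderedAddCommGroup

theorem forall_wDom_iff_le_inf' {M : ℕ} {S : Finset (Fin M → ℝ)} (hS : S.Nonempty)
    (p' : Fin M → ℝ) : (∀ q ∈ S, WDom p' q) ↔ ∀ m, p' m ≤ S.inf' hS fun q => q m := by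
  simp only [WDom, Finset.le_inf'_iff]
  exact ⟨fun h m q hq => h q hq m, fun h q hq m => h m q hq⟩

theorem mdist_min_eq_sum_max_zero_sub {M : ℕ} (p g : Fin M → ℝ) :
    mdist p (fun m => min (p m) (g m)) = ∑ m, max 0 (p m - g m) :=
  Finset.sum_congr rfl fun m _ => abs_sub_min_self_left (p m) (g m)

theorem sum_max_zero_sub_le_mdist {M : ℕ} {p p' g : Fin M → ℝ} (h : ∀ m, p' m ≤ g m) :
    ∑ m, max 0 (p m - g m) ≤ mdist p p' :=
  Finset.sum_le_sum fun m _ => max_zero_sub_le_abs_sub_of_le (h m)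

theorem single_point_min_move_set {M : ℕ} (p : Fin M → ℝ)
    (S : Finset (Fin M → ℝ)) (hS : S.Nonempty) :
    sInf { c : ℝ | ∃ p' : Fin M → ℝ, (∀ q ∈ S, WDom p' q) ∧ c = mdist p p' }
        = ∑ m, max 0 (p m - S.inf' hS fun q => q m) ∧
    (∀ q ∈ S, WDom (fun m => min (p m) (S.inf' hS fun q => q m)) q) ∧
    mdist p (fun m => min (p m) (S.inf' hS fun q => q m))
        = ∑ m, max 0 (p m - S.inf' hS fun q => q m) := by
  have hdom : ∀ q ∈ S, WDom (fun m => min (p m) (S.inf' hS fun q => q m)) q :=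
    (forall_wDom_iff_le_inf' hS _).2 fun m => min_le_right _ _
  have hdist := mdist_min_eq_sum_max_zero_sub p fun m => S.inf' hS fun q => q m
  have hleast : IsLeast { c : ℝ | ∃ p' : Fin M → ℝ, (∀ q ∈ S, WDom p' q) ∧ c = mdist p p' }
      (∑ m, max 0 (p m - S.inf' hS fun q => q m)) := by
    refine ⟨⟨_, hdom, hdist.symm⟩, ?_⟩
    rintro c ⟨p', hp', rfl⟩
    exact sum_max_zero_sub_le_mdist ((forall_wDom_iff_le_inf' hS p').1 hp')
  exact ⟨hleast.csInf_eq, hdom, hdist⟩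
end

section
/- For finite nonempty sets P and Q of points in ℝ^M, DoM(P,Q) equals the minimum, over all assignment functions a : Q → P, of Σ_{p∈P} Σ_m ( p m − min( p m, min over { q m : q ∈ Q, a(q) = p } ) ), where for p with a⁻¹(p) empty the inner minimum over the empty set is taken so that the summand is 0 (i.e., the cost of a point to which no q is assigned is 0). -/
/-- Cost of an assignment `a : Q → P`: for each `p ∈ P`, the total shortfall over
coordinates to the minimum of the points of `Q` assigned to `p`; `0` if no point of
`Q` is assigned to `p`. -/
noncomputable def assignCost {M : ℕ} (P Q : Finset (Fin M → ℝ))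
    (a : (Fin M → ℝ) → (Fin M → ℝ)) : ℝ :=
  ∑ p ∈ P,
    if h : (Q.filter fun q => a q = p).Nonempty then
      ∑ m, (p m - min (p m) ((Q.filter fun q => a q = p).inf' h fun q => q m))
    else 0

lemma assignCost_congr {M : ℕ} (P Q : Finset (Fin M → ℝ))
    {a b : (Fin M → ℝ) → (Fin M → ℝ)} (hab : ∀ q ∈ Q, a q = b q) :
    assignCost P Q a = assignCost P Q b := by
  unfold assignCost
  apply Finset.sum_congr rfl
  intro p _
  have hfil : (Q.filter fun q => a q = p) = (Q.filter fun q => b q = p) := by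
    apply Finset.filter_congr
    intro q hq
    simp [hab q hq]
  simp_rw [hfil]

lemma dom_bddBelow {M : ℕ} (P Q : Finset (Fin M → ℝ)) :
    BddBelow { c : ℝ | ∃ f : (Fin M → ℝ) → (Fin M → ℝ),
      (∀ q ∈ Q, ∃ p ∈ P, WDom (f p) q) ∧ c = ∑ p ∈ P, mdist p (f p) } := by
  refine ⟨0, ?_⟩
  rintro c ⟨f, _, rfl⟩
  apply Finset.sum_nonneg
  intro p _
  exact Finset.sum_nonneg fun m _ => abs_nonneg _

/-- Upper bound: any admissible assignment's cost is in the DoM set. -/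
lemma assignCost_mem {M : ℕ} (P Q : Finset (Fin M → ℝ))
    (b : (Fin M → ℝ) → (Fin M → ℝ)) (hb : ∀ q ∈ Q, b q ∈ P) :
    assignCost P Q b ∈ { c : ℝ | ∃ f : (Fin M → ℝ) → (Fin M → ℝ),
      (∀ q ∈ Q, ∃ p ∈ P, WDom (f p) q) ∧ c = ∑ p ∈ P, mdist p (f p) } := by
  classical
  refine ⟨fun p m =>
    if h : (Q.filter fun q => b q = p).Nonempty then
      min (p m) ((Q.filter fun q => b q = p).inf' h fun q => q m)
    else p m, ?_, ?_⟩
  · intro q hq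
    refine ⟨b q, hb q hq, ?_⟩
    intro m
    have hmem : q ∈ Q.filter fun q' => b q' = b q := by
      simp [Finset.mem_filter, hq]
    have hne : (Q.filter fun q' => b q' = b q).Nonempty := ⟨q, hmem⟩
    simp only [dif_pos hne]
    exact le_trans (min_le_right _ _) (Finset.inf'_le _ hmem)
  · unfold assignCost mdist
    apply Finset.sum_congr rfl
    intro p _
    by_cases h : (Q.filter fun q => b q = p).Nonempty
    · simp only [dif_pos h]
      apply Finset.sum_congr rfl
      intro m _
      rw [abs_of_nonneg]
      simp
    · simp only [dif_neg h]
      simp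

/-- Lower bound: any element of the DoM set is at least some assignment cost. -/
lemma exists_assign_le {M : ℕ} (P Q : Finset (Fin M → ℝ)) (hP : P.Nonempty)
    (f : (Fin M → ℝ) → (Fin M → ℝ)) (hf : ∀ q ∈ Q, ∃ p ∈ P, WDom (f p) q) :
    ∃ a : (Fin M → ℝ) → (Fin M → ℝ), (∀ q ∈ Q, a q ∈ P) ∧
      assignCost P Q a ≤ ∑ p ∈ P, mdist p (f p) := by
  classical
  set a : (Fin M → ℝ) → (Fin M → ℝ) := fun q =>
    if h : q ∈ Q then (hf q h).choose else hP.choose with ha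
  have haP : ∀ q ∈ Q, a q ∈ P := by
    intro q hq
    simp only [ha, dif_pos hq]
    exact (hf q hq).choose_spec.1
  have hdom : ∀ q ∈ Q, WDom (f (a q)) q := by
    intro q hq
    simp only [ha, dif_pos hq]
    exact (hf q hq).choose_spec.2
  refine ⟨a, haP, ?_⟩
  unfold assignCost mdist
  apply Finset.sum_le_sum
  intro p _
  by_cases h : (Q.filter fun q => a q = p).Nonempty
  · simp only [dif_pos h]
    apply Finset.sum_le_sum
    intro m _
    have hle : f p m ≤ (Q.filter fun q => a q = p).inf' h fun q => q m := by
      apply Finset.le_inf'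
      intro q hq
      rw [Finset.mem_filter] at hq
      have := hdom q hq.1 m
      rwa [hq.2] at this
    have h1 : p m - min (p m) ((Q.filter fun q => a q = p).inf' h fun q => q m)
        ≤ p m - min (p m) (f p m) := by
      have := min_le_min (le_refl (p m)) hle
      linarith
    calc p m - min (p m) ((Q.filter fun q => a q = p).inf' h fun q => q m)
        ≤ p m - min (p m) (f p m) := h1
      _ ≤ |p m - f p m| := by
          rcases le_total (p m) (f p m) with hc | hc
          · simp [min_eq_left hc, abs_nonneg]
          · rw [min_eq_right hc, abs_of_nonneg (by linarith)]
  · simp only [dif_neg h]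
    exact Finset.sum_nonneg fun m _ => abs_nonneg _

theorem dom_eq_min_assignment {M : ℕ} (P Q : Finset (Fin M → ℝ))
    (hP : P.Nonempty) (hQ : Q.Nonempty) :
    ∃ a : (Fin M → ℝ) → (Fin M → ℝ), (∀ q ∈ Q, a q ∈ P) ∧
      DoM P Q = assignCost P Q a ∧
      ∀ b : (Fin M → ℝ) → (Fin M → ℝ), (∀ q ∈ Q, b q ∈ P) →
        DoM P Q ≤ assignCost P Q b := by
  classical
  -- extend a function on subtypes to a full assignment
  set ext : (↥Q → ↥P) → (Fin M → ℝ) → (Fin M → ℝ) := fun g q =>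
    if h : q ∈ Q then (g ⟨q, h⟩ : Fin M → ℝ) else hP.choose with hext
  have hextP : ∀ g : ↥Q → ↥P, ∀ q ∈ Q, ext g q ∈ P := by
    intro g q hq
    simp only [hext, dif_pos hq]
    exact (g ⟨q, hq⟩).2
  have hNE : Nonempty (↥Q → ↥P) := ⟨fun _ => ⟨hP.choose, hP.choose_spec⟩⟩
  set S : Finset ℝ := Finset.univ.image (fun g : ↥Q → ↥P => assignCost P Q (ext g))
    with hS
  have hSne : S.Nonempty := by
    refine ⟨assignCost P Q (ext hNE.some), ?_⟩
    simp [hS]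
  set c := S.min' hSne with hc
  obtain ⟨g₀, _, hg₀⟩ := Finset.mem_image.mp (S.min'_mem hSne)
  -- any admissible b has assignCost in S (via restriction), hence c ≤ assignCost b
  have hcle : ∀ b : (Fin M → ℝ) → (Fin M → ℝ), (∀ q ∈ Q, b q ∈ P) →
      c ≤ assignCost P Q b := by
    intro b hb
    have : assignCost P Q b ∈ S := by
      refine Finset.mem_image.mpr ⟨fun q => ⟨b q, hb q q.2⟩, Finset.mem_univ _, ?_⟩
      apply assignCost_congr
      intro q hq
      simp [hext, dif_pos hq]
    exact S.min'_le _ this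
  have hDoMle : ∀ b : (Fin M → ℝ) → (Fin M → ℝ), (∀ q ∈ Q, b q ∈ P) →
      DoM P Q ≤ assignCost P Q b := by
    intro b hb
    exact csInf_le (dom_bddBelow P Q) (assignCost_mem P Q b hb)
  have hge : c ≤ DoM P Q := by
    apply le_csInf
    · exact ⟨_, assignCost_mem P Q (ext g₀) (hextP g₀)⟩
    · rintro x ⟨f, hf, rfl⟩
      obtain ⟨a, haP, hale⟩ := exists_assign_le P Q hP f hf
      exact le_trans (hcle a haP) hale
  refine ⟨ext g₀, hextP g₀, ?_, hDoMle⟩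
  have h1 : DoM P Q ≤ assignCost P Q (ext g₀) := hDoMle _ (hextP g₀)
  have h2 : assignCost P Q (ext g₀) = c := hg₀
  linarith
end

section
/- For finite nonempty sets P and Q of points in ℝ^M, DoM(P,Q) is at least the positive part of the additive ε-indicator: DoM(P,Q) ≥ max(0, I_ε+(P,Q)). -/
/-- The additive ε-indicator `I_ε+(P,Q) = max_{q∈Q} min_{p∈P} max_m (p m - q m)`. -/
noncomputable def epsPlus {M : ℕ} (hM : 0 < M) (P Q : Finset (Fin M → ℝ))
    (hP : P.Nonempty) (hQ : Q.Nonempty) : ℝ :=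
  Q.sup' hQ fun q => P.inf' hP fun p =>
    (Finset.univ : Finset (Fin M)).sup' ⟨⟨0, hM⟩, Finset.mem_univ _⟩ fun m => p m - q m

theorem dom_ge_epsPlus {M : ℕ} (hM : 0 < M) (P Q : Finset (Fin M → ℝ))
    (hP : P.Nonempty) (hQ : Q.Nonempty) :
    DoM P Q ≥ max 0 (epsPlus hM P Q hP hQ) := by

  have hmdist_nonneg : ∀ (p p' : Fin M → ℝ), 0 ≤ mdist p p' := by
    intro p p'
    exact Finset.sum_nonneg fun m _ => abs_nonneg _
  have hne : { c : ℝ | ∃ f : (Fin M → ℝ) → (Fin M → ℝ),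
      (∀ q ∈ Q, ∃ p ∈ P, WDom (f p) q) ∧ c = ∑ p ∈ P, mdist p (f p) }.Nonempty := by
    set z : Fin M → ℝ := fun m => Q.inf' hQ fun q => q m with hz
    refine ⟨∑ p ∈ P, mdist p z, fun _ => z, fun q hq => ?_, rfl⟩
    exact ⟨hP.choose, hP.choose_spec, fun m => Finset.inf'_le _ hq⟩
  apply le_csInf hne
  · rintro c ⟨f, hdom, rfl⟩
    have hsum_nonneg : (0:ℝ) ≤ ∑ p ∈ P, mdist p (f p) :=
      Finset.sum_nonneg fun p _ => hmdist_nonneg p (f p)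
    apply max_le hsum_nonneg
    apply Finset.sup'_le
    intro q hq
    obtain ⟨p, hpP, hpd⟩ := hdom q hq
    refine le_trans (Finset.inf'_le _ hpP) ?_
    apply Finset.sup'_le
    intro m _
    have h1 : p m - q m ≤ p m - f p m := by
      have := hpd m; linarith
    have h2 : p m - f p m ≤ |p m - f p m| := le_abs_self _
    have h3 : |p m - f p m| ≤ mdist p (f p) :=
      Finset.single_le_sum (f := fun m => |p m - f p m|)
        (fun i _ => abs_nonneg _) (Finset.mem_univ m)
    have h4 : mdist p (f p) ≤ ∑ p ∈ P, mdist p (f p) :=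
      Finset.single_le_sum (fun p' _ => hmdist_nonneg p' (f p')) hpP
    linarith
end

section
/- Let P and Q be finite nonempty sets of points in ℝ^M, and let q₁, q₂ ∈ Q be distinct points with q₁ ≼ q₂. Then removing the dominated point q₂ from Q does not change the dominance move: DoM(P, Q \ {q₂}) = DoM(P, Q). (This justifies Step 1 of the exact algorithm, which removes dominated points of Q before computing DoM.) -/
theorem dom_erase_dominated_right {M : ℕ} (P Q : Finset (Fin M → ℝ))
    (hP : P.Nonempty) (hQ : Q.Nonempty)
    (q₁ q₂ : Fin M → ℝ) (hq₁ : q₁ ∈ Q) (hq₂ : q₂ ∈ Q) (hne : q₁ ≠ q₂)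
    (hdom : WDom q₁ q₂) :
    DoM P (Q.erase q₂) = DoM P Q := by
  unfold DoM
  congr 1
  ext c
  constructor
  · rintro ⟨f, hf, rfl⟩
    refine ⟨f, ?_, rfl⟩
    intro q hq
    by_cases h : q = q₂
    · obtain ⟨p, hp, hd⟩ := hf q₁ (Finset.mem_erase.mpr ⟨hne, hq₁⟩)
      exact ⟨p, hp, fun m => (hd m).trans (h ▸ hdom m)⟩
    · exact hf q (Finset.mem_erase.mpr ⟨h, hq⟩)
  · rintro ⟨f, hf, rfl⟩
    exact ⟨f, fun q hq => hf q (Finset.mem_of_mem_erase hq), rfl⟩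
end

section
/- In ℝ^10, let p = (0,0,0,0,0,0,0,0,0,1) and q = (1,1,1,1,1,1,1,1,1,0). Then the additive ε-indicators in both directions are equal, I_ε+({p},{q}) = I_ε+({q},{p}) = 1, whereas the dominance moves differ: DoM({p},{q}) = 1 and DoM({q},{p}) = 9. (This exhibits the information loss of the ε-indicator that DoM avoids.) -/
theorem eps_information_loss :
    let p : Fin 10 → ℝ := fun m => if m.val = 9 then 1 else 0
    let q : Fin 10 → ℝ := fun m => if m.val = 9 then 0 else 1
    epsPlus (by norm_num) {p} {q} (Finset.singleton_nonempty p)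
        (Finset.singleton_nonempty q) = 1 ∧
    epsPlus (by norm_num) {q} {p} (Finset.singleton_nonempty q)
        (Finset.singleton_nonempty p) = 1 ∧
    DoM {p} {q} = 1 ∧
    DoM {q} {p} = 9 := by
  intro p q
  have hp : ∀ m : Fin 10, p m = if m.val = 9 then 1 else 0 := fun m => rfl
  have hq : ∀ m : Fin 10, q m = if m.val = 9 then 0 else 1 := fun m => rfl
  have e9 : ((9 : Fin 10)).val = 9 := rfl
  have e0 : ((0 : Fin 10)).val = 0 := rfl
  have hp9 : p 9 = 1 := by rw [hp, if_pos e9]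
  have hq9 : q 9 = 0 := by rw [hq, if_pos e9]
  have hp0 : p 0 = 0 := by rw [hp]; norm_num
  have hq0 : q 0 = 1 := by rw [hq]; norm_num
  refine ⟨?_, ?_, ?_, ?_⟩
  · rw [epsPlus, Finset.sup'_singleton, Finset.inf'_singleton]
    apply le_antisymm
    · apply Finset.sup'_le
      intro m _
      rw [hp m, hq m]
      by_cases h : m.val = 9 <;> simp [h]
    · have h := Finset.le_sup' (fun m => p m - q m) (Finset.mem_univ (9 : Fin 10))
      simp only [hp9, hq9] at h
      linarith
  · rw [epsPlus, Finset.sup'_singleton, Finset.inf'_singleton]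
    apply le_antisymm
    · apply Finset.sup'_le
      intro m _
      rw [hp m, hq m]
      by_cases h : m.val = 9 <;> simp [h]
    · have h := Finset.le_sup' (fun m => q m - p m) (Finset.mem_univ (0 : Fin 10))
      simp only [hp0, hq0] at h
      linarith
  · rw [DoM]
    apply le_antisymm
    · apply csInf_le
      · refine ⟨0, ?_⟩
        rintro c ⟨f, -, rfl⟩
        simp only [Finset.sum_singleton]
        exact Finset.sum_nonneg fun m _ => abs_nonneg _
      · refine ⟨fun _ => fun _ => 0, ?_, ?_⟩
        · intro q' hq'
          refine ⟨p, Finset.mem_singleton_self _, ?_⟩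
          intro m
          simp only [Finset.mem_singleton] at hq'
          subst hq'
          rw [hq m]
          by_cases h : m.val = 9 <;> simp [h]
        · simp only [Finset.sum_singleton, mdist, hp]
          simp [Fin.sum_univ_succ]
    · apply le_csInf
      · refine ⟨1, fun _ => fun _ => 0, ?_, ?_⟩
        · intro q' hq'
          refine ⟨p, Finset.mem_singleton_self _, ?_⟩
          intro m
          simp only [Finset.mem_singleton] at hq'
          subst hq'
          rw [hq m]
          by_cases h : m.val = 9 <;> simp [h]
        · simp only [Finset.sum_singleton, mdist, hp]
          simp [Fin.sum_univ_succ]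
      · rintro c ⟨f, hf, rfl⟩
        obtain ⟨p', hp', hd⟩ := hf q (Finset.mem_singleton_self _)
        simp only [Finset.mem_singleton] at hp'
        subst hp'
        simp only [Finset.sum_singleton, mdist]
        have h9 : f p 9 ≤ q 9 := hd 9
        rw [hq9] at h9
        have h1 : (1 : ℝ) ≤ |p 9 - f p 9| := by
          calc (1:ℝ) ≤ p 9 - f p 9 := by rw [hp9]; linarith
            _ ≤ |p 9 - f p 9| := le_abs_self _
        calc (1:ℝ) ≤ |p 9 - f p 9| := h1
          _ ≤ ∑ m, |p m - f p m| :=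
            Finset.single_le_sum (f := fun m => |p m - f p m|)
              (fun m _ => abs_nonneg _) (Finset.mem_univ _)
  · rw [DoM]
    apply le_antisymm
    · apply csInf_le
      · refine ⟨0, ?_⟩
        rintro c ⟨f, -, rfl⟩
        simp only [Finset.sum_singleton]
        exact Finset.sum_nonneg fun m _ => abs_nonneg _
      · refine ⟨fun _ => fun _ => 0, ?_, ?_⟩
        · intro p' hp'
          refine ⟨q, Finset.mem_singleton_self _, ?_⟩
          intro m
          simp only [Finset.mem_singleton] at hp'
          subst hp'
          rw [hp m]
          by_cases h : m.val = 9 <;> simp [h]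
        · simp only [Finset.sum_singleton, mdist, hq]
          simp [Fin.sum_univ_succ]
          norm_num
    · apply le_csInf
      · refine ⟨9, fun _ => fun _ => 0, ?_, ?_⟩
        · intro p' hp'
          refine ⟨q, Finset.mem_singleton_self _, ?_⟩
          intro m
          simp only [Finset.mem_singleton] at hp'
          subst hp'
          rw [hp m]
          by_cases h : m.val = 9 <;> simp [h]
        · simp only [Finset.sum_singleton, mdist, hq]
          simp [Fin.sum_univ_succ]
          norm_num
      · rintro c ⟨f, hf, rfl⟩
        obtain ⟨q', hq', hd⟩ := hf p (Finset.mem_singleton_self _)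
        simp only [Finset.mem_singleton] at hq'
        subst hq'
        simp only [Finset.sum_singleton, mdist]
        have key : ∀ m : Fin 10, (if m.val = 9 then (0:ℝ) else 1) ≤ |q m - f q m| := by
          intro m
          by_cases h : m.val = 9
          · simp [h, abs_nonneg]
          · have hm : f q m ≤ p m := hd m
            rw [hp, if_neg h] at hm
            rw [if_neg h]
            calc (1:ℝ) ≤ q m - f q m := by rw [hq, if_neg h]; linarith
              _ ≤ |q m - f q m| := le_abs_self _
        calc (9:ℝ) = ∑ m : Fin 10, (if m.val = 9 then (0:ℝ) else 1) := by
              simp [Fin.sum_univ_succ]; norm_num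
          _ ≤ ∑ m, |q m - f q m| :=
              Finset.sum_le_sum fun m _ => key m
end
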